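/- arXiv:1507.02602 — 9 statements merged into one kernel-verified Lean document; each statement's English description precedes it below -/
import Mathlib

section
/- Let (G,+,·) be a left brace. Define ᵃb := a·b − a, aᵇ := ^((ᵃb)⁻¹)a = (a·b−a)⁻¹·a − (a·b−a)⁻¹, and r : G×G → G×G by r(a,b) = (ᵃb, aᵇ). Then: (i) r is involutive (r∘r = id); (ii) for every a ∈ G the maps b ↦ ᵃb and b ↦ bᵃ are bijections of G (non-degeneracy); (iii) r satisfies the braid relation r¹²∘r²³∘r¹² = r²³∘r¹²∘r²³ on G×G×G; (iv) the compatibility u·v = (ᵘv)·(uᵛ) holds for all u,v ∈ G; (v) the matched-pair conditions ML2: ᵃ(u·v) = (ᵃu)·(^(aᵘ)v) and MR2: (a·b)ᵘ = (a^(ᵇu))·(bᵘ) hold for all a,b,u,v ∈ G. Hence (G,r) is a symmetric group and in particular a non-degenerate symmetric set, i.e. a set-theoretic solution of the Yang–Baxter equation. -/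
/-- The map `r(a,b) = (ᵃb, aᵇ)` built from a left action and a right action. -/
def ybR {G : Type*} (lact ract : G → G → G) : G × G → G × G :=
  fun p => (lact p.1 p.2, ract p.1 p.2)

/-- `r¹² = r × id` acting on triples. -/
def ybR12 {G : Type*} (r : G × G → G × G) : G × G × G → G × G × G :=
  fun p => ((r (p.1, p.2.1)).1, (r (p.1, p.2.1)).2, p.2.2)

/-- `r²³ = id × r` acting on triples. -/
def ybR23 {G : Type*} (r : G × G → G × G) : G × G × G → G × G × G :=
  fun p => (p.1, r p.2)

/-- For a left brace `(G,+,·)` with `ᵃb := a·b − a` and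
`aᵇ := ^((ᵃb)⁻¹)a`, the map `r(a,b) = (ᵃb, aᵇ)` is involutive, non-degenerate,
satisfies the braid relation, the compatibility M3, and the matched-pair
conditions ML2 and MR2; hence `(G,r)` is a non-degenerate symmetric set, i.e. a
set-theoretic solution of the Yang–Baxter equation. -/
theorem leftBrace_gives_symmetric_group {G : Type*} [Group G] [AddCommGroup G]
    (hbrace : ∀ a b c : G, a * (b + c) + a = a * b + a * c)
    (lact ract : G → G → G)
    (hlact : ∀ a b : G, lact a b = a * b - a)
    (hract : ∀ a b : G, ract a b = lact (lact a b)⁻¹ a) :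
    (ybR lact ract ∘ ybR lact ract = id) ∧
    (∀ a : G, Function.Bijective (lact a)) ∧
    (∀ b : G, Function.Bijective (fun a => ract a b)) ∧
    (ybR12 (ybR lact ract) ∘ ybR23 (ybR lact ract) ∘ ybR12 (ybR lact ract)
      = ybR23 (ybR lact ract) ∘ ybR12 (ybR lact ract) ∘ ybR23 (ybR lact ract)) ∧
    (∀ u v : G, u * v = lact u v * ract u v) ∧
    (∀ a u v : G, lact a (u * v) = lact a u * lact (ract a u) v) ∧
    (∀ a b u : G, ract (a * b) u = ract a (lact b u) * ract b u) := by
  -- `1 = 0` in a left brace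
  have h1 : (1 : G) = 0 := by
    have h := hbrace 1 0 0
    simpa using h
  have h0 : ∀ a : G, a * 0 = a := by
    intro a; rw [← h1, mul_one]
  have hma : ∀ a b c : G, a * (b + c) = a * b + a * c - a := by
    intro a b c
    have h := hbrace a b c
    calc a * (b + c) = a * (b + c) + a - a := by abel
      _ = a * b + a * c - a := by rw [h]
  have hms : ∀ a b c : G, a * (b - c) = a * b - a * c + a := by
    intro a b c
    have h := hbrace a (b - c) c
    have e : b - c + c = b := by abel
    rw [e] at h
    calc a * (b - c) = a * (b - c) + a * c - a * c := by abel
      _ = a * b + a - a * c := by rw [← h]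
      _ = a * b - a * c + a := by abel
  have hR : ∀ a b : G, ract a b = (a * b - a)⁻¹ * (a * b) := by
    intro a b
    rw [hract, hlact, hlact]
    symm
    calc (a * b - a)⁻¹ * (a * b) = (a * b - a)⁻¹ * ((a * b - a) + a) := by
          congr 1; abel
      _ = (a * b - a)⁻¹ * (a * b - a) + (a * b - a)⁻¹ * a - (a * b - a)⁻¹ := hma _ _ _
      _ = (a * b - a)⁻¹ * a - (a * b - a)⁻¹ := by rw [inv_mul_cancel, h1]; abel
  have key_xy : ∀ a b c : G, lact a b * lact (ract a b) c = a * b * c - a := by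
    intro a b c
    rw [hlact (ract a b) c, hR a b, mul_assoc (a * b - a)⁻¹ (a * b) c, hlact a b,
      hms (a * b - a) ((a * b - a)⁻¹ * (a * b * c)) ((a * b - a)⁻¹ * (a * b)),
      mul_inv_cancel_left, mul_inv_cancel_left]
    abel
  have haq : ∀ a b c : G, a * (b * c - b) = a * b * c - a * b + a := by
    intro a b c; rw [hms a (b * c) b, ← mul_assoc a b c]
  have hraq : ∀ a b c : G, ract a (lact b c) = (a * b * c - a * b)⁻¹ * (a * b * c - a * b + a) := by
    intro a b c
    rw [hlact b c, hR a (b * c - b), haq a b c]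
    have e : a * b * c - a * b + a - a = a * b * c - a * b := by abel
    rw [e]
  have hmn : ∀ a b c : G, ract a (lact b c) * ract b c = (a * b * c - a * b)⁻¹ * (a * b * c) := by
    intro a b c
    rw [hraq a b c, hR b c,
      mul_assoc ((a * b * c - a * b)⁻¹) (a * b * c - a * b + a) ((b * c - b)⁻¹ * (b * c)),
      ← haq a b c, mul_assoc a (b * c - b) ((b * c - b)⁻¹ * (b * c)),
      mul_inv_cancel_left, ← mul_assoc a b c]
  have hmval : ∀ a b c : G, ract a (lact b c) = (a * b * c - a * b)⁻¹ * a - (a * b * c - a * b)⁻¹ := by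
    intro a b c
    rw [hraq a b c, hma ((a * b * c - a * b)⁻¹) (a * b * c - a * b) a, inv_mul_cancel, h1]
    abel
  have E1 : ∀ a b c : G, lact (lact a b) (lact (ract a b) c) = lact a (lact b c) := by
    intro a b c
    rw [hlact (lact a b), key_xy, hlact a b, hlact a (lact b c), hlact b c,
      hms a (b * c) b, ← mul_assoc a b c]
    abel
  have E2 : ∀ a b c : G, ract (lact a b) (lact (ract a b) c) = lact (ract a (lact b c)) (ract b c) := by
    intro a b c
    rw [hR (lact a b) (lact (ract a b) c), key_xy, hlact a b]
    have e : a * b * c - a - (a * b - a) = a * b * c - a * b := by abel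
    rw [e, hms ((a * b * c - a * b)⁻¹) (a * b * c) a]
    rw [hlact (ract a (lact b c)) (ract b c), hmn a b c, hmval a b c]
    abel
  have E3 : ∀ a b c : G, ract (ract a b) c = ract (ract a (lact b c)) (ract b c) := by
    intro a b c
    have k1 : (a * b - a) * ((a * b - a)⁻¹ * (a * b * c) - (a * b - a)⁻¹ * (a * b)) = a * b * c - a := by
      rw [hms (a * b - a) ((a * b - a)⁻¹ * (a * b * c)) ((a * b - a)⁻¹ * (a * b)),
        mul_inv_cancel_left, mul_inv_cancel_left]
      abel
    have k2 : (a * b * c - a * b) * ((a * b * c - a * b)⁻¹ * (a * b * c)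
        - ((a * b * c - a * b)⁻¹ * a - (a * b * c - a * b)⁻¹)) = a * b * c - a := by
      rw [hms (a * b * c - a * b) ((a * b * c - a * b)⁻¹ * (a * b * c))
          ((a * b * c - a * b)⁻¹ * a - (a * b * c - a * b)⁻¹), mul_inv_cancel_left,
        hms (a * b * c - a * b) ((a * b * c - a * b)⁻¹ * a) ((a * b * c - a * b)⁻¹),
        mul_inv_cancel_left, mul_inv_cancel, h1]
      abel
    calc ract (ract a b) c
        = ((a * b - a)⁻¹ * (a * b * c) - (a * b - a)⁻¹ * (a * b))⁻¹ * ((a * b - a)⁻¹ * (a * b * c)) := by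
          rw [hR (ract a b) c, hR a b, mul_assoc (a * b - a)⁻¹ (a * b) c]
      _ = (a * b * c - a)⁻¹ * (a * b * c) := by
          rw [← mul_assoc, ← mul_inv_rev, k1]
      _ = ((a * b * c - a * b)⁻¹ * (a * b * c)
            - ((a * b * c - a * b)⁻¹ * a - (a * b * c - a * b)⁻¹))⁻¹
            * ((a * b * c - a * b)⁻¹ * (a * b * c)) := by
          conv_rhs => rw [← mul_assoc, ← mul_inv_rev, k2]
      _ = ract (ract a (lact b c)) (ract b c) := by
          rw [hR (ract a (lact b c)) (ract b c), hmn a b c, hmval a b c]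
  refine ⟨?_, ?_, ?_, ?_, ?_, ?_, ?_⟩
  · -- involutive
    funext p
    obtain ⟨a, b⟩ := p
    simp only [Function.comp_apply, ybR, id_eq, Prod.mk.injEq]
    constructor
    · rw [hlact (lact a b) (ract a b), hR a b, hlact a b, mul_inv_cancel_left]
      abel
    · rw [hR (lact a b) (ract a b), hR a b, hlact a b, mul_inv_cancel_left]
      have e : a * b - (a * b - a) = a := by abel
      rw [e, inv_mul_cancel_left]
  · -- left non-degeneracy
    intro a
    rw [Function.bijective_iff_has_inverse]
    refine ⟨fun y => a⁻¹ * (y + a), ?_, ?_⟩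
    · intro b
      dsimp only
      rw [hlact]
      have e : a * b - a + a = a * b := by abel
      rw [e, inv_mul_cancel_left]
    · intro y
      dsimp only
      rw [hlact, mul_inv_cancel_left]
      abel
  · -- right non-degeneracy
    intro b
    rw [Function.bijective_iff_has_inverse]
    refine ⟨fun z => (b * z⁻¹ - b)⁻¹, ?_, ?_⟩
    · intro a
      dsimp only
      have h2 : b * (ract a b)⁻¹ = b + a⁻¹ := by
        calc b * (ract a b)⁻¹ = b * ((a * b)⁻¹ * (a * b - a)) := by
              rw [hR, mul_inv_rev, inv_inv]
          _ = (b * (a * b)⁻¹) * (a * b - a) := by rw [mul_assoc]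
          _ = a⁻¹ * (a * b - a) := by congr 1; group
          _ = a⁻¹ * (a * b) - a⁻¹ * a + a⁻¹ := hms _ _ _
          _ = b + a⁻¹ := by rw [inv_mul_cancel_left, inv_mul_cancel, h1]; abel
      rw [h2]
      have e : b + a⁻¹ - b = a⁻¹ := by abel
      rw [e, inv_inv]
    · intro z
      dsimp only
      set a := (b * z⁻¹ - b)⁻¹ with ha
      have hainv : a⁻¹ = b * z⁻¹ - b := by rw [ha, inv_inv]
      have e1 : a * (b - b * z⁻¹) = a * b - a * b * z⁻¹ + a := by
        rw [hms a b (b * z⁻¹), ← mul_assoc a b z⁻¹]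
      have e2 : b - b * z⁻¹ = -a⁻¹ := by rw [hainv]; abel
      have e3 : a * (-a⁻¹) = a + a := by
        have hz : (-a⁻¹ : G) = 0 - a⁻¹ := by abel
        rw [hz, hms a 0 a⁻¹, mul_inv_cancel, h1, h0]
        abel
      have e4 : a * b - a * b * z⁻¹ + a = a + a := by
        rw [← e1, e2, e3]
      have e5 : a * b - a * b * z⁻¹ = a := by
        exact add_right_cancel e4
      have e6 : a * b - a = a * b * z⁻¹ := by
        calc a * b - a = a * b - (a * b - a * b * z⁻¹) := by rw [e5]
          _ = a * b * z⁻¹ := by abel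
      rw [hR, e6, mul_inv_rev, inv_inv, inv_mul_cancel_right]
  · -- braid relation
    funext p
    obtain ⟨a, b, c⟩ := p
    simp only [Function.comp_apply, ybR12, ybR23, ybR, Prod.mk.injEq]
    exact ⟨E1 a b c, E2 a b c, E3 a b c⟩
  · -- compatibility
    intro u v
    rw [hlact, hR, mul_inv_cancel_left]
  · -- ML2
    intro a u v
    rw [key_xy a u v, hlact a (u * v), ← mul_assoc a u v]
  · -- MR2
    intro a b u
    rw [hmn a b u, hR (a * b) u]
end

section
/- Let (G,σ) be a symmetric group, i.e. a braided group with involutive braiding operator σ(a,b) = (ᵃb, aᵇ). Define a + b := a·(^(a⁻¹)b). Then: (i) + is commutative and associative; (ii) the group identity 1 of (G,·) is the neutral element for +; (iii) the additive inverse of a is ᵃ(a⁻¹); (iv) ᵃb = a·b − a, equivalently a·b = a + ᵃb, for all a,b ∈ G; (v) each map b ↦ ᵃb is an automorphism of (G,+), i.e. ᵃ(b+c) = ᵃb + ᵃc; and (vi) a·(b+c) + a = a·b + a·c for all a,b,c ∈ G. Hence (G,+,·) is a left brace. -/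
/-- A symmetric group in the sense of Takeuchi: a group `G` together with a left
action `lact` (written `ᵃb`) and a right action `ract` (written `aᵇ`, i.e.
`ract a b = aᵇ`) satisfying the matched-pair axioms ML0, MR0, ML1, MR1, ML2,
MR2, the compatibility condition M3, and involutivity of the braiding
`r(a,b) = (ᵃb, aᵇ)`. -/
structure TakSymGroup (G : Type*) [Group G] where
  /-- the left action `(a,b) ↦ ᵃb` -/
  lact : G → G → G
  /-- the right action `(a,b) ↦ aᵇ` -/
  ract : G → G → G
  ml0  : ∀ a : G, lact a 1 = 1
  ml0' : ∀ u : G, lact 1 u = u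
  mr0  : ∀ u : G, ract 1 u = 1
  mr0' : ∀ a : G, ract a 1 = a
  ml1  : ∀ a b u : G, lact (a * b) u = lact a (lact b u)
  mr1  : ∀ a u v : G, ract a (u * v) = ract (ract a u) v
  ml2  : ∀ a u v : G, lact a (u * v) = lact a u * lact (ract a u) v
  mr2  : ∀ a b u : G, ract (a * b) u = ract a (lact b u) * ract b u
  m3   : ∀ u v : G, u * v = lact u v * ract u v
  invl : ∀ u v : G, lact (lact u v) (ract u v) = u
  invr : ∀ u v : G, ract (lact u v) (ract u v) = v

section Aux
variable {G : Type*} [Group G] (S : TakSymGroup G)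

lemma TSG.lact_lact_inv (a b : G) : S.lact a (S.lact a⁻¹ b) = b := by
  rw [← S.ml1, mul_inv_cancel, S.ml0']

lemma TSG.lact_inv_lact (a b : G) : S.lact a⁻¹ (S.lact a b) = b := by
  rw [← S.ml1, inv_mul_cancel, S.ml0']

lemma TSG.ract_inv (a u : G) : S.ract a⁻¹ (S.lact a u) = (S.ract a u)⁻¹ := by
  have h := S.mr2 a⁻¹ a u
  rw [inv_mul_cancel, S.mr0] at h
  exact eq_inv_of_mul_eq_one_left h.symm

lemma TSG.ract_eq (u v : G) : S.ract u v = (S.lact u v)⁻¹ * (u * v) := by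
  rw [eq_inv_mul_iff_mul_eq]; exact (S.m3 u v).symm

lemma TSG.II (u v : G) : S.lact (S.lact u v)⁻¹ u = S.ract u v := by
  have h := congrArg (S.lact (S.lact u v)⁻¹) (S.invl u v)
  rw [TSG.lact_inv_lact] at h
  exact h.symm

lemma TSG.key1 (a b : G) : S.lact a⁻¹ b = (S.ract b⁻¹ a)⁻¹ := by
  have h := TSG.II S b (S.lact b⁻¹ a)
  rw [TSG.lact_lact_inv] at h
  have h2 := TSG.ract_inv S b⁻¹ a
  rw [inv_inv] at h2
  exact h.trans h2

end Aux

/-- Let `(G,σ)` be a symmetric group (a braided group with an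
involutive braiding), and define `a + b := a·(^(a⁻¹)b)`. Then `+` is
commutative and associative, `1` is its neutral element, the additive inverse
of `a` is `ᵃ(a⁻¹)`, one has `ᵃb = a·b − a` (equivalently `a·b = a + ᵃb`),
every map `b ↦ ᵃb` is an automorphism of `(G,+)`, and the left brace law
`a·(b+c) + a = a·b + a·c` holds. Hence `(G,+,·)` is a left brace. -/
theorem symmetricGroup_gives_leftBrace {G : Type*} [Group G] (S : TakSymGroup G)
    (add : G → G → G) (hadd : ∀ a b : G, add a b = a * S.lact a⁻¹ b) :
    (∀ a b : G, add a b = add b a) ∧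
    (∀ a b c : G, add (add a b) c = add a (add b c)) ∧
    (∀ a : G, add a 1 = a ∧ add 1 a = a) ∧
    (∀ a : G, add a (S.lact a a⁻¹) = 1 ∧ add (S.lact a a⁻¹) a = 1) ∧
    (∀ a b : G, S.lact a b = add (a * b) (S.lact a a⁻¹) ∧ a * b = add a (S.lact a b)) ∧
    (∀ a b c : G, S.lact a (add b c) = add (S.lact a b) (S.lact a c)) ∧
    (∀ a b c : G, add (a * add b c) a = add (a * b) (a * c)) := by
  have comm : ∀ a b : G, add a b = add b a := by
    intro a b
    rw [hadd, hadd, TSG.key1 S a b, TSG.ract_eq S b⁻¹ a]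
    group
  have assoc : ∀ a b c : G, add (add a b) c = add a (add b c) := by
    intro a b c
    have e : (S.lact a⁻¹ b)⁻¹ * a⁻¹ = S.ract a⁻¹ b * b⁻¹ := by
      rw [TSG.ract_eq]; group
    rw [hadd a b, hadd b c, hadd, hadd, S.ml2, ← S.ml1, ← e, mul_inv_rev, mul_assoc]
  have neut : ∀ a : G, add a 1 = a ∧ add 1 a = a := by
    intro a
    constructor
    · rw [hadd, S.ml0, mul_one]
    · rw [hadd, inv_one, S.ml0', one_mul]
  have negr : ∀ a : G, add a (S.lact a a⁻¹) = 1 := by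
    intro a
    rw [hadd, TSG.lact_inv_lact, mul_inv_cancel]
  have iv2 : ∀ a b : G, a * b = add a (S.lact a b) := by
    intro a b
    rw [hadd, TSG.lact_inv_lact]
  have iv1 : ∀ a b : G, S.lact a b = add (a * b) (S.lact a a⁻¹) := by
    intro a b
    have h := TSG.key1 S a⁻¹ b
    rw [inv_inv] at h
    rw [hadd, mul_inv_rev, S.ml1, TSG.lact_inv_lact, h, TSG.ract_eq]
    group
  have hv : ∀ a b c : G, S.lact a (add b c) = add (S.lact a b) (S.lact a c) := by
    intro a b c
    have e : S.ract a b * b⁻¹ = (S.lact a b)⁻¹ * a := by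
      rw [TSG.ract_eq]; group
    rw [hadd b c, hadd (S.lact a b) (S.lact a c), S.ml2, ← S.ml1, ← S.ml1, e]
  refine ⟨comm, assoc, neut, fun a => ⟨negr a, by rw [comm]; exact negr a⟩,
    fun a b => ⟨iv1 a b, iv2 a b⟩, hv, ?_⟩
  intro a b c
  rw [iv2 a (add b c), iv2 a b, iv2 a c, hv a b c]
  rw [assoc a (S.lact a b), comm a (S.lact a c), ← assoc (S.lact a b) (S.lact a c) a, assoc]
end

section
/- Let (G,r) be a nontrivial symmetric group with associated left brace (G,+,·), set a*b := a·b − a − b, and define the chain of ideals G^(1) := G and G^(s+1) := the additive subgroup of (G,+) generated by {a*b : a ∈ G^(s), b ∈ G}. Then (G,r) has finite multipermutation level m ≥ 1 (i.e., m is the least integer such that the tower identity ((⋯((y_m ◁ y_{m−1}) ◁ ⋯ ◁ y₂) ◁ y₁) ◁ x = ((⋯(y_{m−1} ◁ y_{m−2}) ◁ ⋯ ◁ y₂) ◁ y₁) ◁ x holds for all x,y₁,…,y_m ∈ G) if and only if the brace G is right nilpotent of nilpotency class m+1, i.e. G^(m+1) = {1} and G^(m) ≠ {1}. -/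
/-- The tower of actions `actTower lact x [y₁, …, y_m] =
`((⋯(y_m ◁ y_{m−1}) ◁ ⋯ ◁ y₂) ◁ y₁) ◁ x`, where `α ◁ z := ^(α)z = lact α z`;
for the empty list it is `x` itself. -/
def actTower {X : Type*} (lact : X → X → X) : X → List X → X
  | x, [] => x
  | x, y :: ys => lact (actTower lact y ys) x

/-- The addition of the left brace associated to a symmetric group:
`a + b := a·(^(a⁻¹)b)`. -/
def sgAdd {G : Type*} [Group G] (S : TakSymGroup G) (a b : G) : G :=
  a * S.lact a⁻¹ b

/-- The additive inverse in the associated left brace: `−a = ᵃ(a⁻¹)`. -/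
def sgNeg {G : Type*} [Group G] (S : TakSymGroup G) (a : G) : G :=
  S.lact a a⁻¹

/-- The star operation of the associated left brace:
`a * b := a·b − a − b = (ᵃb) + (−b)`. -/
def sgStar {G : Type*} [Group G] (S : TakSymGroup G) (a b : G) : G :=
  sgAdd S (S.lact a b) (sgNeg S b)

/-- Membership in the additive subgroup of the associated brace `(G,+)`
generated by a subset `T` (here `1 = 0` is the additive neutral element). -/
inductive InAddSubgroup {G : Type*} [Group G] (S : TakSymGroup G) (T : Set G) : G → Prop
  | base {x : G} : x ∈ T → InAddSubgroup S T x
  | zero : InAddSubgroup S T 1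
  | add {x y : G} : InAddSubgroup S T x → InAddSubgroup S T y →
      InAddSubgroup S T (sgAdd S x y)
  | neg {x : G} : InAddSubgroup S T x → InAddSubgroup S T (sgNeg S x)

/-- Rump's chain of ideals, indexed so that `rumpChain S s = G^(s+1)`:
`G^(1) = G` and `G^(s+1)` is the additive subgroup generated by
`{a*b : a ∈ G^(s), b ∈ G}`. -/
def rumpChain {G : Type*} [Group G] (S : TakSymGroup G) : ℕ → Set G
  | 0 => Set.univ
  | s + 1 =>
      {x | InAddSubgroup S {y | ∃ a ∈ rumpChain S s, ∃ b : G, y = sgStar S a b} x}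


section Basic
variable {G : Type*} [Group G] (S : TakSymGroup G)

lemma lact_lact (a b u : G) : S.lact a (S.lact b u) = S.lact (a * b) u :=
  (S.ml1 a b u).symm

lemma lact_cancel (a u : G) : S.lact a⁻¹ (S.lact a u) = u := by
  rw [lact_lact, inv_mul_cancel, S.ml0']

lemma lact_cancel' (a u : G) : S.lact a (S.lact a⁻¹ u) = u := by
  rw [lact_lact, mul_inv_cancel, S.ml0']

lemma lact_injective (a : G) : Function.Injective (S.lact a) := by
  intro x y h
  have := congrArg (S.lact a⁻¹) h
  rwa [lact_cancel, lact_cancel] at this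

lemma sg_lact_add (c a b : G) :
    S.lact c (sgAdd S a b) = sgAdd S (S.lact c a) (S.lact c b) := by
  unfold sgAdd
  rw [S.ml2 c a (S.lact a⁻¹ b)]
  congr 1
  apply lact_injective S (S.lact c a)
  rw [lact_lact, lact_lact, ← S.m3, ← lact_lact, lact_cancel', ← lact_lact, lact_cancel']

lemma sg_add_comm (a b : G) : sgAdd S a b = sgAdd S b a := by
  obtain ⟨c, rfl⟩ : ∃ c, b = S.lact a c := ⟨S.lact a⁻¹ b, (lact_cancel' S a b).symm⟩
  show a * S.lact a⁻¹ (S.lact a c) = S.lact a c * S.lact (S.lact a c)⁻¹ a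
  rw [lact_cancel]
  have h1 : S.lact (S.lact a c)⁻¹ a = S.ract a c := by
    apply lact_injective S (S.lact a c)
    rw [lact_cancel', S.invl]
  rw [h1, ← S.m3]

lemma sg_add_assoc (a b c : G) : sgAdd S (sgAdd S a b) c = sgAdd S a (sgAdd S b c) := by
  rw [show sgAdd S b c = S.lact a (sgAdd S (S.lact a⁻¹ b) (S.lact a⁻¹ c)) by
    rw [← sg_lact_add, lact_cancel']]
  show (a * S.lact a⁻¹ b) * S.lact (a * S.lact a⁻¹ b)⁻¹ c
      = a * S.lact a⁻¹ (S.lact a (sgAdd S (S.lact a⁻¹ b) (S.lact a⁻¹ c)))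
  rw [lact_cancel]
  show _ = a * (S.lact a⁻¹ b * S.lact (S.lact a⁻¹ b)⁻¹ (S.lact a⁻¹ c))
  rw [mul_assoc]
  congr 2
  rw [mul_inv_rev, ← lact_lact]

lemma sg_add_zero (a : G) : sgAdd S a 1 = a := by
  show a * S.lact a⁻¹ 1 = a; rw [S.ml0, mul_one]

lemma sg_zero_add (b : G) : sgAdd S 1 b = b := by
  show 1 * S.lact 1⁻¹ b = b; rw [inv_one, S.ml0', one_mul]

lemma sg_add_neg (a : G) : sgAdd S a (sgNeg S a) = 1 := by
  show a * S.lact a⁻¹ (S.lact a a⁻¹) = 1; rw [lact_cancel, mul_inv_cancel]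

end Basic

/-- Type synonym carrying the additive group of the brace. -/
def BrG {G : Type*} [Group G] (_S : TakSymGroup G) : Type _ := G

section Br
variable {G : Type*} [Group G] (S : TakSymGroup G)

/-- identity map into the synonym -/
def toB (S : TakSymGroup G) (a : G) : BrG S := a
/-- identity map out of the synonym -/
def ofB (S : TakSymGroup G) (a : BrG S) : G := a

instance : Zero (BrG S) := ⟨toB S 1⟩
instance : Add (BrG S) := ⟨fun a b => toB S (sgAdd S (ofB S a) (ofB S b))⟩
instance : Neg (BrG S) := ⟨fun a => toB S (sgNeg S (ofB S a))⟩

instance : AddCommGroup (BrG S) where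
  add a b := a + b
  zero := 0
  neg a := -a
  add_assoc a b c := sg_add_assoc S (ofB S a) (ofB S b) (ofB S c)
  zero_add a := sg_zero_add S (ofB S a)
  add_zero a := sg_add_zero S (ofB S a)
  add_comm a b := sg_add_comm S (ofB S a) (ofB S b)
  neg_add_cancel a := by
    show sgAdd S (sgNeg S (ofB S a)) (ofB S a) = 1
    rw [sg_add_comm]; exact sg_add_neg S (ofB S a)
  nsmul := nsmulRec
  zsmul := zsmulRec

lemma sgAdd_eq (a b : BrG S) : sgAdd S a b = a + b := rfl
lemma sgNeg_eq (a : BrG S) : sgNeg S a = -a := rfl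
lemma one_eq_zero : (1 : G) = (0 : BrG S) := rfl

end Br

section Br2
variable {G : Type*} [Group G] (S : TakSymGroup G)

/-- identity map into the synonym (alias used in statements) -/
def lactB (c : G) (x : BrG S) : BrG S := S.lact c x

lemma lactB_add (c : G) (x y : BrG S) :
    lactB S c (x + y) = lactB S c x + lactB S c y := sg_lact_add S c x y

lemma lactB_zero (c : G) : lactB S c 0 = 0 := S.ml0 c

lemma lactB_neg (c : G) (x : BrG S) : lactB S c (-x) = - lactB S c x := by
  have h := lactB_add S c x (-x)
  rw [add_neg_cancel, lactB_zero] at h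
  exact (neg_eq_of_add_eq_zero_right h.symm).symm

lemma lactB_sub (c : G) (x y : BrG S) :
    lactB S c (x - y) = lactB S c x - lactB S c y := by
  rw [sub_eq_add_neg, sub_eq_add_neg, lactB_add, lactB_neg]

lemma lactB_lact (c d : G) (x : BrG S) :
    lactB S c (lactB S d x) = lactB S (c * d) x := lact_lact S c d x

lemma lactB_one (x : BrG S) : lactB S 1 x = x := S.ml0' x

lemma toB_lact (c x : G) : toB S (S.lact c x) = lactB S c (toB S x) := rfl

lemma toB_sgAdd (a b : G) : toB S (sgAdd S a b) = toB S a + toB S b := rfl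

lemma toB_sgNeg (a : G) : toB S (sgNeg S a) = - toB S a := rfl

lemma toB_star (a b : G) :
    toB S (sgStar S a b) = lactB S a (toB S b) - toB S b := by
  rw [show sgStar S a b = sgAdd S (S.lact a b) (sgNeg S b) from rfl,
    toB_sgAdd, toB_sgNeg, toB_lact, sub_eq_add_neg]

lemma sg_mul_eq_add (a b : G) : a * b = sgAdd S a (S.lact a b) := by
  unfold sgAdd; rw [lact_cancel]

lemma star_add_self (v y : G) : sgAdd S (sgStar S v y) y = S.lact v y := by
  show toB S (sgStar S v y) + toB S y = lactB S v (toB S y)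
  rw [toB_star]; exact sub_add_cancel _ _

/-- Key recursion: `λ_{B+d} y = λ_B((λ_{B⁻¹}d)*y) + λ_B y`. -/
lemma lact_add_decomp (B d y : G) :
    S.lact (sgAdd S B d) y
      = sgAdd S (S.lact B (sgStar S (S.lact B⁻¹ d) y)) (S.lact B y) := by
  show S.lact (B * S.lact B⁻¹ d) y = _
  rw [← lact_lact, ← star_add_self S (S.lact B⁻¹ d) y, sg_lact_add]

lemma sg_cancel {X c Y : G} (h : sgAdd S X c = sgAdd S c Y) : X = Y := by
  have h' : (toB S X + toB S c : BrG S) = toB S c + toB S Y := h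
  rw [add_comm (toB S X)] at h'
  have h'' := add_left_cancel h'
  exact h''

lemma sg_diff (B A : G) : A = sgAdd S B (sgAdd S (sgNeg S B) A) := by
  show (toB S A : BrG S) = toB S B + (- toB S B + toB S A)
  rw [add_neg_cancel_left]

lemma inv_eq_lact_neg (c : G) : S.lact c⁻¹ (sgNeg S c) = c⁻¹ := by
  unfold sgNeg; rw [lact_cancel]

/-- `λ_c(a*b) = (cac⁻¹)*(λ_c b)` (star is equivariant). -/
lemma star_conj (c a b : G) :
    sgStar S (c * a * c⁻¹) (S.lact c b) = S.lact c (sgStar S a b) := by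
  show toB S (sgStar S (c * a * c⁻¹) (S.lact c b)) = lactB S c (toB S (sgStar S a b))
  rw [toB_star, toB_star, lactB_sub, toB_lact, lactB_lact, inv_mul_cancel_right,
    ← lactB_lact]

lemma star_conj' (c a y : G) :
    sgStar S (c * a * c⁻¹) y = S.lact c (sgStar S a (S.lact c⁻¹ y)) := by
  rw [← star_conj S c a (S.lact c⁻¹ y), lact_cancel']

lemma lactB_cancel' (c : G) (x : BrG S) :
    lactB S c (lactB S c⁻¹ x) = x := lact_cancel' S c x

/-- `λ_c a = cac⁻¹ + λ_c(a * (λ_{c⁻¹}c))`. -/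
lemma lact_conj_decomp (c a : G) :
    sgAdd S (c * a * c⁻¹) (S.lact c (sgStar S a (S.lact c⁻¹ c))) = S.lact c a := by
  have h1 : lactB S c (lactB S a (lactB S c⁻¹ (toB S c)))
      = lactB S (c * a * c⁻¹) (toB S c) := by
    rw [lactB_lact, lactB_lact]
  have e2 : lactB S c (toB S (sgStar S a (S.lact c⁻¹ c)))
      = lactB S (c * a * c⁻¹) (toB S c) - toB S c := by
    rw [toB_star, lactB_sub, toB_lact, h1, lactB_cancel']
  have hic : toB S c⁻¹ = lactB S c⁻¹ (- toB S c) := by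
    rw [← toB_sgNeg, ← toB_lact, inv_eq_lact_neg]
  have m3 : lactB S c (lactB S a (toB S c⁻¹))
      = - lactB S (c * a * c⁻¹) (toB S c) := by
    rw [hic, lactB_neg, lactB_neg, lactB_neg, h1]
  have e1 : toB S (c * a * c⁻¹)
      = toB S c + (lactB S c (toB S a) + - lactB S (c * a * c⁻¹) (toB S c)) := by
    rw [← m3, ← lactB_add]
    have m2 : toB S (a * c⁻¹) = toB S a + lactB S a (toB S c⁻¹) := by
      rw [sg_mul_eq_add S a c⁻¹, toB_sgAdd, toB_lact]
    rw [← m2]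
    rw [show (c * a * c⁻¹ : G) = c * (a * c⁻¹) from mul_assoc c a c⁻¹,
      sg_mul_eq_add S c (a * c⁻¹), toB_sgAdd, toB_lact]
  show toB S (c * a * c⁻¹) + lactB S c (toB S (sgStar S a (S.lact c⁻¹ c)))
      = lactB S c (toB S a)
  rw [e2, e1]; abel

end Br2

section Ideals
variable {G : Type*} [Group G] (S : TakSymGroup G)

/-- operative notion of ideal of the associated brace -/
structure SGIdeal (I : Set G) : Prop where
  zero_mem : (1 : G) ∈ I
  add_mem : ∀ x ∈ I, ∀ y ∈ I, sgAdd S x y ∈ I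
  neg_mem : ∀ x ∈ I, sgNeg S x ∈ I
  lact_mem : ∀ (c : G), ∀ x ∈ I, S.lact c x ∈ I
  star_mem : ∀ x ∈ I, ∀ y : G, sgStar S x y ∈ I

lemma SGIdeal.lact_mem_rev {I : Set G} (hI : SGIdeal S I) {c x : G}
    (h : S.lact c x ∈ I) : x ∈ I := by
  have := hI.lact_mem c⁻¹ _ h
  rwa [lact_cancel] at this

/-- The socle: elements acting trivially. -/
def Soc : Set G := {a | ∀ x, S.lact a x = x}

lemma soc_inv {a : G} (ha : a ∈ Soc S) : a⁻¹ ∈ Soc S := by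
  intro x
  conv_lhs => rw [← ha x]
  exact lact_cancel S a x

lemma soc_star_self {a : G} (ha : a ∈ Soc S) (z : G) : sgStar S a z = 1 := by
  show sgAdd S (S.lact a z) (sgNeg S z) = 1
  rw [ha z]
  exact sg_add_neg S z

lemma soc_lact_eq_conj {a : G} (ha : a ∈ Soc S) (c : G) :
    S.lact c a = c * a * c⁻¹ := by
  have h := lact_conj_decomp S c a
  rw [soc_star_self S ha, S.ml0, sg_add_zero] at h
  exact h.symm

lemma soc_isIdeal : SGIdeal S (Soc S) where
  zero_mem := S.ml0'
  add_mem x hx y hy := by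
    intro u
    show S.lact (x * S.lact x⁻¹ y) u = u
    rw [← lact_lact, (soc_inv S hx) y, hy, hx]
  neg_mem x hx := by
    show S.lact x x⁻¹ ∈ Soc S
    rw [hx x⁻¹]
    exact soc_inv S hx
  lact_mem c x hx := by
    rw [soc_lact_eq_conj S hx c]
    intro u
    rw [← lact_lact, ← lact_lact, hx, lact_cancel']
  star_mem x hx y := by
    rw [soc_star_self S hx]
    exact S.ml0'

/-- One step of the "preimage of the socle of the retract" construction. -/
def Hstep (I : Set G) : Set G := {a | ∀ y : G, sgStar S a y ∈ I}

variable {S}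

lemma subset_Hstep {I : Set G} (hI : SGIdeal S I) : I ⊆ Hstep S I :=
  fun x hx y => hI.star_mem x hx y

lemma Hstep_conj_mem {I : Set G} (hI : SGIdeal S I) {a : G}
    (ha : a ∈ Hstep S I) (c : G) : c * a * c⁻¹ ∈ Hstep S I := by
  intro y
  rw [star_conj' S c a y]
  exact hI.lact_mem c _ (ha _)

lemma Hstep_lact_decomp {I : Set G} (hI : SGIdeal S I) {a : G}
    (ha : a ∈ Hstep S I) (c : G) :
    ∃ s ∈ I, S.lact c a = sgAdd S (c * a * c⁻¹) s :=
  ⟨S.lact c (sgStar S a (S.lact c⁻¹ c)), hI.lact_mem c _ (ha _),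
    (lact_conj_decomp S c a).symm⟩

lemma lactB_add_decomp (B d y : G) :
    lactB S (sgAdd S B d) (toB S y)
      = lactB S B (toB S (sgStar S (S.lact B⁻¹ d) y)) + lactB S B (toB S y) :=
  lact_add_decomp S B d y

/-- star of a sum, decomposed: `(b+s)*y = λ_b((λ_{b⁻¹}s)*y) + b*y`. -/
lemma star_add_decomp (b s y : G) :
    sgStar S (sgAdd S b s) y
      = sgAdd S (S.lact b (sgStar S (S.lact b⁻¹ s) y)) (sgStar S b y) := by
  show toB S (sgStar S (sgAdd S b s) y)
      = toB S (sgAdd S (S.lact b (sgStar S (S.lact b⁻¹ s) y)) (sgStar S b y))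
  rw [toB_star, lactB_add_decomp, toB_sgAdd, toB_lact, toB_star, toB_star]
  abel

lemma Hstep_add_mem_aux {I : Set G} (hI : SGIdeal S I) {b : G}
    (hb : b ∈ Hstep S I) {s : G} (hs : s ∈ I) (y : G) :
    sgStar S (sgAdd S b s) y ∈ I := by
  rw [star_add_decomp]
  exact hI.add_mem _ (hI.lact_mem b _ (hI.star_mem _ (hI.lact_mem b⁻¹ _ hs) y)) _
    (hb y)

lemma Hstep_add_mem {I : Set G} (hI : SGIdeal S I) {a a' : G}
    (ha : a ∈ Hstep S I) (ha' : a' ∈ Hstep S I) :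
    sgAdd S a a' ∈ Hstep S I := by
  intro y
  rw [star_add_decomp]
  -- lact a⁻¹ a' = (a⁻¹ * a' * a) + s with s ∈ I
  obtain ⟨s, hs, hdec⟩ := Hstep_lact_decomp hI ha' a⁻¹
  rw [show a⁻¹ * a' * a⁻¹⁻¹ = a⁻¹ * a' * a by rw [inv_inv]] at hdec
  have hb : a⁻¹ * a' * a ∈ Hstep S I := by
    have := Hstep_conj_mem hI ha' a⁻¹
    rwa [inv_inv] at this
  have hstar : sgStar S (S.lact a⁻¹ a') y ∈ I := by
    rw [hdec]
    exact Hstep_add_mem_aux hI hb hs y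
  exact hI.add_mem _ (hI.lact_mem a _ hstar) _ (ha y)

lemma Hstep_inv_mem {I : Set G} (hI : SGIdeal S I) {a : G}
    (ha : a ∈ Hstep S I) : a⁻¹ ∈ Hstep S I := by
  intro y
  -- star a⁻¹ y = - star a (lact a⁻¹ y)
  have : sgStar S a⁻¹ y = sgNeg S (sgStar S a (S.lact a⁻¹ y)) := by
    show toB S (sgStar S a⁻¹ y) = toB S (sgNeg S (sgStar S a (S.lact a⁻¹ y)))
    rw [toB_star, toB_sgNeg, toB_star,
      show toB S (S.lact a⁻¹ y) = lactB S a⁻¹ (toB S y) from rfl, lactB_cancel']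
    abel
  rw [this]
  exact hI.neg_mem _ (ha _)

lemma Hstep_lact_mem {I : Set G} (hI : SGIdeal S I) {a : G}
    (ha : a ∈ Hstep S I) (c : G) : S.lact c a ∈ Hstep S I := by
  obtain ⟨s, hs, hdec⟩ := Hstep_lact_decomp hI ha c
  rw [hdec]
  exact Hstep_add_mem hI (Hstep_conj_mem hI ha c) (subset_Hstep hI hs)

lemma Hstep_isIdeal {I : Set G} (hI : SGIdeal S I) : SGIdeal S (Hstep S I) where
  zero_mem := by
    intro y
    show sgStar S 1 y ∈ I
    have : sgStar S 1 y = 1 := by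
      show sgAdd S (S.lact 1 y) (sgNeg S y) = 1
      rw [S.ml0']
      exact sg_add_neg S y
    rw [this]; exact hI.zero_mem
  add_mem x hx y hy := Hstep_add_mem hI hx hy
  neg_mem x hx := by
    show S.lact x x⁻¹ ∈ Hstep S I
    exact Hstep_lact_mem hI (Hstep_inv_mem hI hx) x
  lact_mem c x hx := Hstep_lact_mem hI hx c
  star_mem x hx y := subset_Hstep hI (hx y)

end Ideals

section Rump
variable {G : Type*} [Group G] {S : TakSymGroup G}

lemma InAddSubgroup.mono {T T' : Set G} (h : T ⊆ T') {x : G}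
    (hx : InAddSubgroup S T x) : InAddSubgroup S T' x := by
  induction hx with
  | base hy => exact .base (h hy)
  | zero => exact .zero
  | add _ _ ih1 ih2 => exact .add ih1 ih2
  | neg _ ih => exact .neg ih

lemma InAddSubgroup.subset_of_closed {T I : Set G} (h1 : (1 : G) ∈ I)
    (hadd : ∀ x ∈ I, ∀ y ∈ I, sgAdd S x y ∈ I)
    (hneg : ∀ x ∈ I, sgNeg S x ∈ I) (hT : T ⊆ I) {x : G}
    (hx : InAddSubgroup S T x) : x ∈ I := by
  induction hx with
  | base hy => exact hT hy
  | zero => exact h1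
  | add _ _ ih1 ih2 => exact hadd _ ih1 _ ih2
  | neg _ ih => exact hneg _ ih

lemma mem_rumpChain_succ {x : G} {s : ℕ} :
    x ∈ rumpChain S (s + 1) ↔
      InAddSubgroup S {y | ∃ a ∈ rumpChain S s, ∃ b : G, y = sgStar S a b} x :=
  Iff.rfl

lemma one_mem_rumpChain (s : ℕ) : (1 : G) ∈ rumpChain S s := by
  cases s with
  | zero => trivial
  | succ s => exact .zero

lemma rumpChain_succ_subset (s : ℕ) :
    rumpChain S (s + 1) ⊆ rumpChain S s := by
  induction s with
  | zero => exact fun x _ => trivial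
  | succ s ih =>
    intro x hx
    refine (mem_rumpChain_succ).2 <| (mem_rumpChain_succ.1 hx).mono ?_
    rintro y ⟨a, ha, b, hb⟩
    exact ⟨a, ih ha, b, hb⟩

lemma rumpChain_antitone {s t : ℕ} (h : s ≤ t) :
    rumpChain S t ⊆ rumpChain S s := by
  induction t with
  | zero => rw [Nat.le_zero.1 h]
  | succ t ih =>
    rcases Nat.lt_or_ge s (t+1) with hlt | hge
    · exact (rumpChain_succ_subset t).trans (ih (Nat.lt_succ_iff.1 hlt))
    · rw [Nat.le_antisymm h hge]

lemma rumpChain_star_mem {s : ℕ} {a : G} (ha : a ∈ rumpChain S s) (b : G) :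
    sgStar S a b ∈ rumpChain S (s + 1) :=
  .base ⟨a, ha, b, rfl⟩

lemma rumpChain_add_mem {s : ℕ} {x y : G} (hx : x ∈ rumpChain S s)
    (hy : y ∈ rumpChain S s) : sgAdd S x y ∈ rumpChain S s := by
  cases s with
  | zero => trivial
  | succ s => exact .add hx hy

lemma rumpChain_neg_mem {s : ℕ} {x : G} (hx : x ∈ rumpChain S s) :
    sgNeg S x ∈ rumpChain S s := by
  cases s with
  | zero => trivial
  | succ s => exact .neg hx

lemma sg_lact_neg (c x : G) : S.lact c (sgNeg S x) = sgNeg S (S.lact c x) :=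
  lactB_neg S c (toB S x)

lemma conj_eq_lact_sub (c b : G) :
    c * b * c⁻¹ = S.lact c (sgAdd S b (sgNeg S (sgStar S b (S.lact c⁻¹ c)))) := by
  have key := congrArg (toB S) (lact_conj_decomp S c b)
  rw [toB_sgAdd, toB_lact] at key
  show toB S (c * b * c⁻¹)
      = lactB S c (toB S b + - toB S (sgStar S b (S.lact c⁻¹ c)))
  rw [lactB_add, lactB_neg]
  have h3 := eq_sub_of_add_eq key
  rw [show (toB S (S.lact c b) : BrG S) = lactB S c (toB S b) from rfl] at h3
  rw [h3, sub_eq_add_neg]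

lemma rumpChain_lact_mem : ∀ (s : ℕ) (c : G), ∀ x ∈ rumpChain S s,
    S.lact c x ∈ rumpChain S s := by
  intro s
  induction s with
  | zero => intro c x _; trivial
  | succ s ih =>
    -- first, conjugation-invariance at level s
    have hconj : ∀ (c : G), ∀ b ∈ rumpChain S s, c * b * c⁻¹ ∈ rumpChain S s := by
      intro c b hb
      have hz : sgStar S b (S.lact c⁻¹ c) ∈ rumpChain S s :=
        rumpChain_succ_subset s (rumpChain_star_mem hb _)
      have key := lact_conj_decomp S c b
      -- c * b * c⁻¹ = λ_c b - λ_c (b * z) = λ_c (b - b*z)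
      have hmem : sgAdd S b (sgNeg S (sgStar S b (S.lact c⁻¹ c))) ∈ rumpChain S s :=
        rumpChain_add_mem hb (rumpChain_neg_mem hz)
      rw [conj_eq_lact_sub c b]
      exact ih c _ hmem
    intro c x hx
    have hx' := mem_rumpChain_succ.1 hx
    clear hx
    induction hx' with
    | base hy =>
      obtain ⟨a, ha, b, rfl⟩ := hy
      have : S.lact c (sgStar S a b) = sgStar S (c * a * c⁻¹) (S.lact c b) :=
        (star_conj S c a b).symm
      rw [this]
      exact rumpChain_star_mem (hconj c a ha) _
    | zero =>
      rw [S.ml0]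
      exact one_mem_rumpChain _
    | add _ _ ih1 ih2 =>
      rw [sg_lact_add]
      exact rumpChain_add_mem ih1 ih2
    | neg hx' ih1 =>
      rw [sg_lact_neg]
      exact rumpChain_neg_mem ih1

end Rump

section Towers
variable {G : Type*} [Group G] (S : TakSymGroup G)

/-- `towerFold S [y₁, …, y_j] = ((y_j ◁ y_{j-1}) ◁ ⋯) ◁ y₁`, `towerFold S [] = 1`. -/
def towerFold : List G → G
  | [] => 1
  | y :: ys => S.lact (towerFold ys) y

lemma actTower_eq : ∀ (ys : List G) (x : G),
    actTower S.lact x ys = S.lact (towerFold S ys) x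
  | [], x => (S.ml0' x).symm
  | y :: ys, x => by
    show S.lact (actTower S.lact y ys) x = S.lact (S.lact (towerFold S ys) y) x
    rw [actTower_eq ys y]

variable {S}

/-- The backbone of `mpl ≤ k → G^(k+1) = 1`: successive tower differences lie in
the Rump chain. -/
lemma towerFold_diff : ∀ (ys : List G), ys ≠ [] →
    ∃ d ∈ rumpChain S (ys.length - 1),
      towerFold S ys = sgAdd S (towerFold S ys.dropLast) d
  | [], h => absurd rfl h
  | [y], _ => by
    refine ⟨y, trivial, ?_⟩
    show S.lact (towerFold S []) y = sgAdd S (towerFold S [].dropLast) y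
    show S.lact 1 y = sgAdd S 1 y
    rw [S.ml0', sg_zero_add]
  | y :: z :: t, _ => by
    obtain ⟨d, hd, hA⟩ := towerFold_diff (z :: t) (by simp)
    set B := towerFold S ((z :: t).dropLast) with hB
    refine ⟨S.lact B (sgStar S (S.lact B⁻¹ d) y), ?_, ?_⟩
    · have h1 : sgStar S (S.lact B⁻¹ d) y ∈ rumpChain S ((z :: t).length - 1 + 1) :=
        rumpChain_star_mem (rumpChain_lact_mem _ B⁻¹ _ hd) y
      have h2 : (z :: t).length - 1 + 1 = (y :: z :: t).length - 1 := rfl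
      rw [h2] at h1
      exact rumpChain_lact_mem _ B _ h1
    · show S.lact (towerFold S (z :: t)) y = _
      rw [hA, lact_add_decomp, sg_add_comm]
      rfl

/-- If `G^(k+1) = 1` then the tower identity of length `k` holds. -/
lemma tower_id_of_rumpChain_trivial {k : ℕ} (hk : 1 ≤ k)
    (h : rumpChain S k = {1}) (x : G) (ys : List G) (hlen : ys.length = k) :
    actTower S.lact x ys = actTower S.lact x ys.dropLast := by
  have hne : ys ≠ [] := by
    intro hnil; rw [hnil] at hlen; simp at hlen; omega
  obtain ⟨d, hd, hA⟩ := towerFold_diff ys hne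
  rw [hlen] at hd
  rw [actTower_eq, actTower_eq, hA, lact_add_decomp]
  have hv : S.lact (towerFold S ys.dropLast)⁻¹ d ∈ rumpChain S (k - 1) :=
    rumpChain_lact_mem _ _ _ hd
  have hstar : sgStar S (S.lact (towerFold S ys.dropLast)⁻¹ d) x
      ∈ rumpChain S (k - 1 + 1) := rumpChain_star_mem hv x
  rw [Nat.sub_add_cancel hk, h] at hstar
  rw [hstar, S.ml0, sg_zero_add]

/-- The ascending chain of preimages of iterated socles. -/
def Jchain (S : TakSymGroup G) : ℕ → Set G
  | 0 => Soc S
  | i + 1 => Hstep S (Jchain S i)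

lemma Jchain_isIdeal : ∀ i, SGIdeal S (Jchain S i)
  | 0 => soc_isIdeal S
  | i + 1 => Hstep_isIdeal (Jchain_isIdeal i)

lemma diff_mem_soc {u v : G} (h : ∀ x, S.lact u x = S.lact v x) :
    sgAdd S (sgNeg S v) u ∈ Soc S := by
  have he : sgAdd S (sgNeg S v) u = u * v⁻¹ := by
    rw [sg_add_comm]
    show u * S.lact u⁻¹ (sgNeg S v) = u * v⁻¹
    congr 1
    show S.lact u⁻¹ (S.lact v v⁻¹) = v⁻¹
    rw [← h v⁻¹, lact_cancel]
  rw [he]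
  intro x
  rw [← lact_lact, h (S.lact v⁻¹ x), lact_cancel']

/-- downward induction: from the tower identity of length `k`, the difference of
a tower of length `k - j` and its truncation lies in `Jchain j`. -/
lemma tower_stepdown {k : ℕ} (hk : 1 ≤ k)
    (hQ : ∀ (x : G) (ys : List G), ys.length = k →
      actTower S.lact x ys = actTower S.lact x ys.dropLast) :
    ∀ (j : ℕ), j ≤ k - 1 → ∀ (ys : List G), ys ≠ [] → ys.length = k - j →
      sgAdd S (sgNeg S (towerFold S ys.dropLast)) (towerFold S ys) ∈ Jchain S j := by
  intro j
  induction j with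
  | zero =>
    intro _ ys _ hlen
    refine diff_mem_soc (fun x => ?_)
    have h1 := hQ x ys (by omega)
    rw [actTower_eq, actTower_eq] at h1
    exact h1
  | succ j ih =>
    intro hj ys hne hlen
    have hj' : j ≤ k - 1 := by omega
    set B := towerFold S ys.dropLast with hB
    set d := sgAdd S (sgNeg S B) (towerFold S ys) with hdd
    have hAB : towerFold S ys = sgAdd S B d := sg_diff S B _
    have hmem : ∀ y : G, sgStar S (S.lact B⁻¹ d) y ∈ Jchain S j := by
      intro y
      have hcons := ih hj' (y :: ys) (by simp) (by simp [hlen]; omega)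
      rw [List.dropLast_cons_of_ne_nil hne] at hcons
      have e1 : towerFold S (y :: ys) = S.lact (towerFold S ys) y := rfl
      have e2 : towerFold S (y :: ys.dropLast) = S.lact B y := rfl
      rw [e1, e2] at hcons
      have e3 : S.lact (towerFold S ys) y
          = sgAdd S (S.lact B (sgStar S (S.lact B⁻¹ d) y)) (S.lact B y) := by
        rw [hAB, lact_add_decomp]
      -- hcons : sgAdd (sgNeg (L B y)) (L (F ys) y) ∈ J j
      -- rewrite L (F ys) y and cancel
      have e4 : sgAdd S (sgNeg S (S.lact B y)) (S.lact (towerFold S ys) y)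
          = S.lact B (sgStar S (S.lact B⁻¹ d) y) := by
        rw [e3]
        show (- lactB S B (toB S y)
            + (toB S (S.lact B (sgStar S (S.lact B⁻¹ d) y)) + lactB S B (toB S y))
            : BrG S) = toB S (S.lact B (sgStar S (S.lact B⁻¹ d) y))
        abel
      rw [e4] at hcons
      exact SGIdeal.lact_mem_rev S (Jchain_isIdeal (S := S) j) hcons
    have hv : S.lact B⁻¹ d ∈ Jchain S (j + 1) := hmem
    have : S.lact B (S.lact B⁻¹ d) ∈ Jchain S (j + 1) :=
      (Jchain_isIdeal (S := S) (j + 1)).lact_mem B _ hv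
    rwa [lact_cancel'] at this

/-- If the tower identity of length `k ≥ 1` holds then `G^(k+1) = 1`. -/
lemma rumpChain_trivial_of_tower_id {k : ℕ} (hk : 1 ≤ k)
    (hQ : ∀ (x : G) (ys : List G), ys.length = k →
      actTower S.lact x ys = actTower S.lact x ys.dropLast) :
    rumpChain S k = {1} := by
  -- every element lies in `Jchain (k-1)`
  have huniv : ∀ y : G, y ∈ Jchain S (k - 1) := by
    intro y
    have h := tower_stepdown hk hQ (k - 1) le_rfl [y] (by simp) (by simp; omega)
    have e : sgAdd S (sgNeg S (towerFold S ([y] : List G).dropLast))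
        (towerFold S [y]) = y := by
      show sgAdd S (sgNeg S (1 : G)) (S.lact 1 y) = y
      rw [S.ml0']
      show sgAdd S (S.lact 1 1⁻¹) y = y
      rw [inv_one, S.ml0, sg_zero_add]
    rwa [e] at h
  -- rumpChain S j ⊆ Jchain S (k - 1 - j)
  have hsub : ∀ j, j ≤ k - 1 → rumpChain S j ⊆ Jchain S (k - 1 - j) := by
    intro j
    induction j with
    | zero => intro _ x _; exact huniv x
    | succ j ih =>
      intro hj x hx
      have hj' : j ≤ k - 1 := by omega
      have hI := Jchain_isIdeal (S := S) (k - 1 - (j + 1))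
      refine InAddSubgroup.subset_of_closed hI.zero_mem hI.add_mem hI.neg_mem
        ?_ (mem_rumpChain_succ.1 hx)
      rintro y ⟨a, ha, b, rfl⟩
      have haJ : a ∈ Jchain S (k - 1 - j) := ih hj' ha
      have he : k - 1 - j = (k - 1 - (j + 1)) + 1 := by omega
      rw [he] at haJ
      exact haJ b
  have hsoc : rumpChain S (k - 1) ⊆ Soc S := by
    have := hsub (k - 1) le_rfl
    rwa [Nat.sub_self] at this
  -- conclude
  apply Set.eq_singleton_iff_unique_mem.2
  refine ⟨one_mem_rumpChain k, ?_⟩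
  intro x hx
  have hk' : k - 1 + 1 = k := by omega
  rw [← hk'] at hx
  refine InAddSubgroup.subset_of_closed (I := {1}) rfl ?_ ?_ ?_
    (mem_rumpChain_succ.1 hx)
  · rintro u (rfl : u = 1) v (rfl : v = 1)
    show sgAdd S 1 1 = 1
    rw [sg_zero_add]
  · rintro u (rfl : u = 1)
    show sgNeg S 1 = 1
    show S.lact 1 1⁻¹ = 1
    rw [inv_one, S.ml0]
  · rintro y ⟨a, ha, b, rfl⟩
    exact soc_star_self S (hsoc ha) b

end Towers

section Main
variable {G : Type*} [Group G] {S : TakSymGroup G}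

theorem mpl_iff_right_nilpotent' (hnontriv : ∃ a b : G, S.lact a b ≠ b)
    (m : ℕ) (hm : 1 ≤ m) :
    ((∀ (x : G) (ys : List G), ys.length = m →
        actTower S.lact x ys = actTower S.lact x ys.dropLast) ∧
      ∀ k : ℕ, 0 < k → k < m →
        ¬ (∀ (x : G) (ys : List G), ys.length = k →
            actTower S.lact x ys = actTower S.lact x ys.dropLast)) ↔
    (rumpChain S m = {1} ∧ rumpChain S (m - 1) ≠ {1}) := by
  constructor
  · rintro ⟨hQ, hmin⟩
    refine ⟨rumpChain_trivial_of_tower_id hm hQ, ?_⟩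
    intro hcontra
    by_cases hm1 : m = 1
    · subst hm1
      obtain ⟨a, b, hab⟩ := hnontriv
      have hb : b ∈ rumpChain S 0 := trivial
      rw [show (1 : ℕ) - 1 = 0 from rfl] at hcontra
      rw [hcontra] at hb
      have hb1 : b = 1 := hb
      rw [hb1, S.ml0] at hab
      exact hab rfl
    · have hQk := tower_id_of_rumpChain_trivial (k := m - 1) (by omega) hcontra
      exact hmin (m - 1) (by omega) (by omega) hQk
  · rintro ⟨h1, h2⟩
    refine ⟨tower_id_of_rumpChain_trivial hm h1, ?_⟩
    intro k hk0 hkm hQk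
    have htriv := rumpChain_trivial_of_tower_id hk0 hQk
    apply h2
    refine Set.eq_singleton_iff_unique_mem.2 ⟨one_mem_rumpChain _, fun x hx => ?_⟩
    have hsub : rumpChain S (m - 1) ⊆ rumpChain S k := rumpChain_antitone (by omega)
    have hxk := hsub hx
    rw [htriv] at hxk
    exact hxk

end Main

/-- A nontrivial symmetric group `(G,r)` has finite
multipermutation level `m ≥ 1` (i.e. `m` is the least integer for which the
tower identity of length `m` holds) if and only if its associated left brace is
right nilpotent of nilpotency class `m+1`, i.e. `G^(m+1) = {1}` and
`G^(m) ≠ {1}` (recall `rumpChain S s = G^(s+1)`). -/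
theorem mpl_iff_right_nilpotent {G : Type*} [Group G] (S : TakSymGroup G)
    (hnontriv : ∃ a b : G, S.lact a b ≠ b) (m : ℕ) (hm : 1 ≤ m) :
    ((∀ (x : G) (ys : List G), ys.length = m →
        actTower S.lact x ys = actTower S.lact x ys.dropLast) ∧
      ∀ k : ℕ, 0 < k → k < m →
        ¬ (∀ (x : G) (ys : List G), ys.length = k →
            actTower S.lact x ys = actTower S.lact x ys.dropLast)) ↔
    (rumpChain S m = {1} ∧ rumpChain S (m - 1) ≠ {1}) := by
  exact mpl_iff_right_nilpotent' hnontriv m hm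
end

section
/- Let (G,r) be a symmetric group. Then for all a,b ∈ G the following equalities hold: a^(^(a⁻¹)b) = ^(b⁻¹)a; (a⁻¹)ᵇ = (a^(^(a⁻¹)b))⁻¹; ᵇ(a⁻¹) = (^(b^(a⁻¹))a)⁻¹; (ᵇa)⁻¹ = (a⁻¹)^(b⁻¹); (ᵇ(a⁻¹))⁻¹ = a^(b⁻¹); (^(b⁻¹)a)⁻¹ = (a⁻¹)ᵇ; and (^(b⁻¹)(a⁻¹))⁻¹ = aᵇ. -/
/-- In a symmetric group `(G,r)`, for all `a,b` the following
equalities hold: `a^(^(a⁻¹)b) = ^(b⁻¹)a`; `(a⁻¹)ᵇ = (a^(^(a⁻¹)b))⁻¹`;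
`ᵇ(a⁻¹) = (^(b^(a⁻¹))a)⁻¹`; `(ᵇa)⁻¹ = (a⁻¹)^(b⁻¹)`; `(ᵇ(a⁻¹))⁻¹ = a^(b⁻¹)`;
`(^(b⁻¹)a)⁻¹ = (a⁻¹)ᵇ`; `(^(b⁻¹)(a⁻¹))⁻¹ = aᵇ`. -/
theorem symGroup_inverse_identities {G : Type*} [Group G] (S : TakSymGroup G) :
    ∀ a b : G,
      S.ract a (S.lact a⁻¹ b) = S.lact b⁻¹ a ∧
      S.ract a⁻¹ b = (S.ract a (S.lact a⁻¹ b))⁻¹ ∧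
      S.lact b a⁻¹ = (S.lact (S.ract b a⁻¹) a)⁻¹ ∧
      (S.lact b a)⁻¹ = S.ract a⁻¹ b⁻¹ ∧
      (S.lact b a⁻¹)⁻¹ = S.ract a b⁻¹ ∧
      (S.lact b⁻¹ a)⁻¹ = S.ract a⁻¹ b ∧
      (S.lact b⁻¹ a⁻¹)⁻¹ = S.ract a b := by

  have h1 : ∀ a b : G, S.ract a (S.lact a⁻¹ b) = S.lact b⁻¹ a := by
    intro a b
    have key := S.invl a (S.lact a⁻¹ b)
    rw [← S.ml1, mul_inv_cancel, S.ml0'] at key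
    have key2 := congrArg (S.lact b⁻¹) key
    rw [← S.ml1, inv_mul_cancel, S.ml0'] at key2
    exact key2
  have h2 : ∀ a b : G, S.ract a⁻¹ b = (S.ract a (S.lact a⁻¹ b))⁻¹ := by
    intro a b
    have key := S.mr2 a a⁻¹ b
    rw [mul_inv_cancel, S.mr0] at key
    exact eq_inv_of_mul_eq_one_right key.symm
  have h3 : ∀ a b : G, S.lact b a⁻¹ = (S.lact (S.ract b a⁻¹) a)⁻¹ := by
    intro a b
    have key := S.ml2 b a⁻¹ a
    rw [inv_mul_cancel, S.ml0] at key
    exact eq_inv_of_mul_eq_one_left key.symm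
  have h6 : ∀ a b : G, (S.lact b⁻¹ a)⁻¹ = S.ract a⁻¹ b := by
    intro a b
    rw [h2, h1]
  intro a b
  refine ⟨h1 a b, h2 a b, h3 a b, ?_, ?_, h6 a b, ?_⟩
  · have := h6 a b⁻¹; rwa [inv_inv] at this
  · have := h6 a⁻¹ b⁻¹; rwa [inv_inv, inv_inv] at this
  · have := h6 a⁻¹ b; rwa [inv_inv] at this
end

section
/- Let (G,r) be a symmetric group satisfying condition lri: ᵃ(bᵃ) = b = (ᵃb)ᵃ for all a,b ∈ G, and let (G,+,·) be its associated left brace with addition a + b := a·(^(a⁻¹)b). Then: (1) condition Raut holds, i.e. (u+v)ᵃ = uᵃ + vᵃ for all a,u,v ∈ G; and (2) the identity (^(ᵛa)u)·(ᵃv) = (ᵃu)·(^(aᵘ)v) holds for all a,u,v ∈ G. -/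
/-- Let `(G,r)` be a symmetric group satisfying condition lri,
with associated left brace addition `a + b := a·(^(a⁻¹)b)`.  Then condition
Raut holds: `(u+v)ᵃ = uᵃ + vᵃ`, and the identity
`(^(ᵛa)u)·(ᵃv) = (ᵃu)·(^(aᵘ)v)` holds for all `a,u,v`. -/
theorem lri_implies_Raut {G : Type*} [Group G] (S : TakSymGroup G)
    (hlri : ∀ a b : G, S.lact a (S.ract b a) = b ∧ S.ract (S.lact a b) a = b)
    (add : G → G → G) (hadd : ∀ a b : G, add a b = a * S.lact a⁻¹ b) :
    (∀ a u v : G, S.ract (add u v) a = add (S.ract u a) (S.ract v a)) ∧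
    (∀ a u v : G,
      S.lact (S.lact v a) u * S.lact a v = S.lact a u * S.lact (S.ract a u) v) := by
  -- λ_{a⁻¹} and λ_a are inverse bijections
  have linv : ∀ a b : G, S.lact a⁻¹ (S.lact a b) = b := by
    intro a b; rw [← S.ml1, inv_mul_cancel, S.ml0']
  have linv' : ∀ a b : G, S.lact a (S.lact a⁻¹ b) = b := by
    intro a b; rw [← S.ml1, mul_inv_cancel, S.ml0']
  -- the right action is the inverse of the left action
  have hr : ∀ x y : G, S.ract x y = S.lact y⁻¹ x := by
    intro x y
    have h := linv y (S.ract x y)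
    rw [(hlri y x).1] at h
    exact h.symm
  -- (**): λ_{λ_v(w)}(v) = λ_w(v)
  have star : ∀ v w : G, S.lact (S.lact v w) v = S.lact w v := by
    intro v w
    have h := S.invr (S.lact v w) v
    rw [hr (S.lact v w) v, linv] at h
    rw [hr] at h
    have := congrArg (S.lact w) h
    rw [linv'] at this
    exact this
  -- λ_v(a⁻¹) = (λ_v(a))⁻¹
  have lact_inv : ∀ v a : G, S.lact v a⁻¹ = (S.lact v a)⁻¹ := by
    intro v a
    have h := S.ml2 v a⁻¹ a
    rw [inv_mul_cancel, S.ml0, hr, inv_inv, star a v] at h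
    exact eq_inv_of_mul_eq_one_left h.symm
  -- commutativity of the brace addition
  have comm : ∀ a b : G, a * S.lact a⁻¹ b = b * S.lact b⁻¹ a := by
    intro a b
    have h4 := S.invl a (S.lact a⁻¹ b)
    rw [linv', hr] at h4
    have h5 : S.lact (S.lact a⁻¹ b)⁻¹ a = S.lact b⁻¹ a := by
      have := congrArg (S.lact b⁻¹) h4
      rw [linv] at this
      exact this
    have h3 := S.m3 a (S.lact a⁻¹ b)
    rw [linv', hr, h5] at h3
    exact h3
  constructor
  · -- Raut
    intro a u v
    rw [hadd, hadd, hr, hr, hr, S.ml2, hr]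
    congr 1
    rw [← S.ml1, ← S.ml1]
    congr 1
    rw [lact_inv, ← mul_inv_rev, ← mul_inv_rev, comm u a]
  · -- the identity
    intro a u v
    rw [← S.ml2]
    have h := S.mr2 u v a⁻¹
    rw [hr, hr, hr, lact_inv] at h
    simp only [inv_inv] at h
    exact h.symm
end

section
/- Let (G,r) be a symmetric group with associated left brace (G,+,·). Then G acts upon itself from the left as automorphisms, i.e. condition MLaut: ᵃ(b·c) = (ᵃb)·(ᵃc) for all a,b,c ∈ G, holds if and only if L_(aᵇ) = L_a for all a,b ∈ G (i.e. ^(aᵇ)c = ᵃc for all a,b,c ∈ G). Moreover, each of these conditions implies condition lri (ᵃ(bᵃ) = b = (ᵃb)ᵃ for all a,b), the cyclic conditions cc, and condition Raut ((u+v)ᵃ = uᵃ + vᵃ for all a,u,v ∈ G). (For a nontrivial symmetric group these conditions are exactly the condition that (G,r) is a multipermutation solution of level 2.) -/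
/-- Let `(G,r)` be a symmetric group with associated left brace
addition `a + b := a·(^(a⁻¹)b)`.  Then `G` acts upon itself from the left as
automorphisms (condition MLaut: `ᵃ(b·c) = (ᵃb)·(ᵃc)`) if and only if
`L_(aᵇ) = L_a` for all `a,b`; moreover each of these conditions implies
condition lri, the cyclic conditions cc, and condition Raut. -/
theorem MLaut_iff_lact_invariance {G : Type*} [Group G] (S : TakSymGroup G)
    (add : G → G → G) (hadd : ∀ a b : G, add a b = a * S.lact a⁻¹ b) :
    ((∀ a b c : G, S.lact a (b * c) = S.lact a b * S.lact a c) ↔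
      (∀ a b c : G, S.lact (S.ract a b) c = S.lact a c)) ∧
    ((∀ a b c : G, S.lact a (b * c) = S.lact a b * S.lact a c) →
      ((∀ a b : G, S.lact a (S.ract b a) = b ∧ S.ract (S.lact a b) a = b) ∧
        (∀ x y : G,
          S.lact (S.ract y x) x = S.lact y x ∧
          S.ract x (S.lact x y) = S.ract x y ∧
          S.lact (S.lact x y) x = S.lact y x ∧
          S.ract x (S.ract y x) = S.ract x y) ∧
        (∀ a u v : G, S.ract (add u v) a = add (S.ract u a) (S.ract v a)))) := by
  have linv : ∀ a b : G, S.lact a⁻¹ (S.lact a b) = b := by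
    intro a b; rw [← S.ml1, inv_mul_cancel, S.ml0']
  have linv' : ∀ a b : G, S.lact a (S.lact a⁻¹ b) = b := by
    intro a b; rw [← S.ml1, mul_inv_cancel, S.ml0']
  have linj : ∀ a : G, Function.Injective (S.lact a) := by
    intro a x y h
    have := congrArg (S.lact a⁻¹) h
    rwa [linv, linv] at this
  have fwd : (∀ a b c : G, S.lact a (b * c) = S.lact a b * S.lact a c) →
      (∀ a b c : G, S.lact (S.ract a b) c = S.lact a c) := by
    intro ML a b c
    have h := S.ml2 a b c
    rw [ML] at h
    exact (mul_left_cancel h).symm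
  constructor
  · constructor
    · exact fwd
    · intro H a b c
      rw [S.ml2, H]
  · intro ML
    have H := fwd ML
    have key1 : ∀ c d x : G, S.lact (S.lact c d) x = S.lact d x := by
      intro c d x
      have h := H (S.lact c d) (S.ract c d) x
      rw [S.invr] at h
      exact h.symm
    have ractf : ∀ a b : G, S.ract a b = S.lact b⁻¹ a := by
      intro a b
      have h := S.invl a b
      rw [key1] at h
      have h2 := congrArg (S.lact b⁻¹) h
      rwa [linv] at h2
    have comm : ∀ x y z : G, S.lact x (S.lact y z) = S.lact y (S.lact x z) := by
      intro x y z
      calc S.lact x (S.lact y z) = S.lact (x * y) z := (S.ml1 x y z).symm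
        _ = S.lact (S.lact x y * S.ract x y) z := by rw [← S.m3]
        _ = S.lact (S.lact x y) (S.lact (S.ract x y) z) := S.ml1 _ _ _
        _ = S.lact y (S.lact (S.ract x y) z) := key1 _ _ _
        _ = S.lact y (S.lact x z) := by rw [H]
    refine ⟨fun a b => ⟨?_, ?_⟩, fun x y => ⟨?_, ?_, ?_, ?_⟩, ?_⟩
    · rw [ractf, linv']
    · rw [ractf, linv]
    · rw [ractf]
      exact key1 _ _ _
    · rw [ractf, ractf]
      apply linj (S.lact x y)
      rw [linv', key1, linv']
    · exact key1 _ _ _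
    · rw [ractf, ractf, ractf]
      apply linj (S.lact x⁻¹ y)
      rw [linv', key1, linv']
    · intro a u v
      rw [hadd, hadd, ractf, ractf, ractf, ML]
      congr 1
      apply linj (S.lact a⁻¹ u)
      rw [linv', key1, comm, linv']
end

section
/- Let (G,+,·) be a two-sided brace whose additive group (G,+) is a free abelian group with basis X ⊆ G, and suppose X is invariant under all left action maps, i.e. ᵃx := a·x − a ∈ X for every a ∈ G and x ∈ X. Then ˣy = y for all x,y ∈ X; in other words, the induced solution on X is the trivial solution. (This is the key step in proving that a non-degenerate symmetric set whose associated left brace G(X,r) is two-sided must be a trivial solution.) -/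
/-- Let `(G,+,·)` be a two-sided brace whose additive group
`(G,+)` is free abelian with basis `X ⊆ G` (i.e. `X` is `ℤ`-linearly
independent and spans `G`), and suppose `X` is invariant under all left action
maps `ᵃx = a·x − a`.  Then `ˣy = y` for all `x,y ∈ X`: the induced solution on
`X` is the trivial solution. -/
theorem twoSidedBrace_basis_invariant_trivial {G : Type*} [Group G] [AddCommGroup G]
    (hleft : ∀ a b c : G, a * (b + c) + a = a * b + a * c)
    (hright : ∀ a b c : G, (a + b) * c + c = a * c + b * c)
    (X : Set G)
    (hindep : LinearIndependent ℤ ((↑) : X → G))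
    (hspan : Submodule.span ℤ X = ⊤)
    (hinv : ∀ a : G, ∀ x ∈ X, a * x - a ∈ X) :
    ∀ x ∈ X, ∀ y ∈ X, x * y - x = y := by
  -- additive and multiplicative identities coincide
  have h01 : (0 : G) = 1 := by
    have h := hleft 1 0 0
    simpa using h.symm
  intro x hx y hy
  have ha : x * y - x ∈ X := hinv x y hy
  have hb : (-x) * y + x ∈ X := by
    have := hinv (-x) y hy
    simpa [sub_neg_eq_add] using this
  -- key additive relation:  (x*y - x) + ((-x)*y + x) = y + y
  have hkey : (x * y - x) + ((-x) * y + x) = y + y := by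
    have h := hright x (-x) y
    rw [add_neg_cancel, h01, one_mul] at h
    -- h : y + y = x * y + (-x) * y
    generalize hq : (-x) * y = q at h ⊢
    generalize hp : x * y = p at h ⊢
    rw [h]
    abel
  set a' : X := ⟨x * y - x, ha⟩
  set b' : X := ⟨(-x) * y + x, hb⟩
  set y' : X := ⟨y, hy⟩
  have hl : (Finsupp.single a' (1 : ℤ) + Finsupp.single b' 1 - Finsupp.single y' 2) = 0 := by
    apply linearIndependent_iff.mp hindep
    rw [map_sub, map_add, Finsupp.linearCombination_single, Finsupp.linearCombination_single,
      Finsupp.linearCombination_single]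
    show (1 : ℤ) • (x * y - x) + (1 : ℤ) • ((-x) * y + x) - (2 : ℤ) • y = 0
    rw [one_smul, one_smul, two_smul, hkey]
    abel
  have hy'' := DFunLike.congr_fun hl y'
  simp only [Finsupp.coe_add, Finsupp.coe_sub, Pi.add_apply, Pi.sub_apply,
    Finsupp.single_apply, Finsupp.coe_zero, Pi.zero_apply] at hy''
  by_cases h1 : a' = y'
  · have : x * y - x = y := congrArg Subtype.val h1
    exact this
  · by_cases h2 : b' = y' <;> simp [h1, h2] at hy''
end

section
/- Let (G,+,·) be a left brace, with left action ᵃb := a·b − a and right action aᵇ := ^((ᵃb)⁻¹)a. Then G is a two-sided brace (i.e. (a+b)·c + c = a·c + b·c for all a,b,c) if and only if the identity c·(^((a·b·c)⁻¹)c) = (^(b⁻¹)c)·(^(((aᵇ)·(^(b⁻¹)c))⁻¹)c) holds for all a,b,c ∈ G. -/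
/-- Let `(G,+,·)` be a left brace with left action
`ᵃb := a·b − a` and right action `aᵇ := ^((ᵃb)⁻¹)a`.  Then `G` is a two-sided
brace if and only if
`c·(^((a·b·c)⁻¹)c) = (^(b⁻¹)c)·(^(((aᵇ)·(^(b⁻¹)c))⁻¹)c)` for all `a,b,c`. -/
theorem twoSided_iff_identity {G : Type*} [Group G] [AddCommGroup G]
    (hleft : ∀ a b c : G, a * (b + c) + a = a * b + a * c)
    (lact ract : G → G → G)
    (hlact : ∀ a b : G, lact a b = a * b - a)
    (hract : ∀ a b : G, ract a b = lact (lact a b)⁻¹ a) :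
    (∀ a b c : G, (a + b) * c + c = a * c + b * c) ↔
    (∀ a b c : G, c * lact (a * b * c)⁻¹ c
        = lact b⁻¹ c * lact (ract a b * lact b⁻¹ c)⁻¹ c) := by
  -- basic facts
  have hone : (1 : G) = 0 := by
    have h := hleft 1 0 0
    simp only [one_mul, add_zero] at h
    simpa using h
  have hsub : ∀ a x y : G, a * (x - y) = a * x - a * y + a := by
    intro a x y
    have h1 := hleft a (x - y) y
    rw [sub_add_cancel] at h1
    calc a * (x - y) = (a * (x - y) + a * y) - a * y := by abel
      _ = (a * x + a) - a * y := by rw [← h1]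
      _ = a * x - a * y + a := by abel
  have hL_add : ∀ a x y : G, lact a (x + y) = lact a x + lact a y := by
    intro a x y
    simp only [hlact]
    calc a * (x + y) - a = (a * (x + y) + a) - a - a := by abel
      _ = (a * x + a * y) - a - a := by rw [hleft]
      _ = (a * x - a) + (a * y - a) := by abel
  have hL_mul : ∀ a b c : G, lact (a * b) c = lact a (lact b c) := by
    intro a b c
    simp only [hlact]
    rw [hsub, mul_assoc]
    abel
  have hL_one : ∀ c : G, lact 1 c = c := by
    intro c
    rw [hlact, one_mul, hone, sub_zero]
  have hmul_eq : ∀ a b : G, a * b = a + lact a b := by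
    intro a b
    rw [hlact]; abel
  have hract_eq : ∀ a b : G, ract a b = (lact a b)⁻¹ * (a * b) := by
    intro a b
    rw [hract, eq_inv_mul_iff_mul_eq]
    calc lact a b * lact (lact a b)⁻¹ a
        = lact a b + lact (lact a b) (lact (lact a b)⁻¹ a) := hmul_eq _ _
      _ = lact a b + lact (lact a b * (lact a b)⁻¹) a := by rw [hL_mul]
      _ = lact a b + lact 1 a := by rw [mul_inv_cancel]
      _ = lact a b + a := by rw [hL_one]
      _ = a + lact a b := by abel
      _ = a * b := (hmul_eq a b).symm
  -- two-sidedness in terms of lact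
  have hT : (∀ a b c : G, (a + b) * c + c = a * c + b * c) ↔
      (∀ x y c : G, lact (x + y) c + c = lact x c + lact y c) := by
    constructor
    · intro h x y c
      simp only [hlact]
      calc (x + y) * c - (x + y) + c = ((x + y) * c + c) - (x + y) := by abel
        _ = (x * c + y * c) - (x + y) := by rw [h]
        _ = (x * c - x) + (y * c - y) := by abel
    · intro h a b c
      have h' := h a b c
      simp only [hlact] at h'
      calc (a + b) * c + c = ((a + b) * c - (a + b) + c) + (a + b) := by abel
        _ = ((a * c - a) + (b * c - b)) + (a + b) := by rw [h']
        _ = a * c + b * c := by abel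
  -- reduce the identity to an additive statement
  have hred : ∀ a b c : G,
      (c * lact (a * b * c)⁻¹ c = lact b⁻¹ c * lact (ract a b * lact b⁻¹ c)⁻¹ c) ↔
      (c + lact (b⁻¹ * a⁻¹) c = lact b⁻¹ c + lact (b⁻¹ * a⁻¹ * lact a b) c) := by
    intro a b c
    have e1 : c * (a * b * c)⁻¹ = b⁻¹ * a⁻¹ := by group
    have hLHS : c * lact (a * b * c)⁻¹ c = c + lact (b⁻¹ * a⁻¹) c := by
      calc c * lact (a * b * c)⁻¹ c = c + lact c (lact (a * b * c)⁻¹ c) := hmul_eq _ _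
        _ = c + lact (c * (a * b * c)⁻¹) c := by rw [hL_mul]
        _ = c + lact (b⁻¹ * a⁻¹) c := by rw [e1]
    have e2 : lact b⁻¹ c * (ract a b * lact b⁻¹ c)⁻¹ = b⁻¹ * a⁻¹ * lact a b := by
      rw [hract_eq]; group
    have hRHS : lact b⁻¹ c * lact (ract a b * lact b⁻¹ c)⁻¹ c
        = lact b⁻¹ c + lact (b⁻¹ * a⁻¹ * lact a b) c := by
      calc lact b⁻¹ c * lact (ract a b * lact b⁻¹ c)⁻¹ c
          = lact b⁻¹ c + lact (lact b⁻¹ c) (lact (ract a b * lact b⁻¹ c)⁻¹ c) := hmul_eq _ _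
        _ = lact b⁻¹ c + lact (lact b⁻¹ c * (ract a b * lact b⁻¹ c)⁻¹) c := by rw [hL_mul]
        _ = lact b⁻¹ c + lact (b⁻¹ * a⁻¹ * lact a b) c := by rw [e2]
    rw [hLHS, hRHS]
  rw [hT]
  constructor
  · intro h a b c
    rw [hred]
    have h1 : lact (a * b) c + c = lact a c + lact (lact a b) c := by
      have := h a (lact a b) c
      rwa [← hmul_eq] at this
    have h2 := congrArg (lact (b⁻¹ * a⁻¹)) h1
    rw [hL_add, hL_add, ← hL_mul, ← hL_mul, ← hL_mul] at h2
    have e3 : b⁻¹ * a⁻¹ * (a * b) = 1 := by group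
    have e4 : b⁻¹ * a⁻¹ * a = b⁻¹ := by group
    rwa [e3, e4, hL_one] at h2
  · intro h x y c
    set b := lact x⁻¹ y with hb
    have hxb : lact x b = y := by
      rw [hb, ← hL_mul, mul_inv_cancel, hL_one]
    have h1 := (hred x b c).mp (h x b c)
    have h2 := congrArg (lact (x * b)) h1
    rw [hL_add, hL_add, ← hL_mul, ← hL_mul, ← hL_mul] at h2
    have e3 : x * b * (b⁻¹ * x⁻¹) = 1 := by group
    have e4 : x * b * b⁻¹ = x := by group
    have e5 : x * b * (b⁻¹ * x⁻¹ * lact x b) = lact x b := by group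
    rw [e3, e4, e5, hL_one, hxb] at h2
    have hxy : x * b = x + y := by rw [hmul_eq, hxb]
    rwa [hxy] at h2
end

section
/- Let (G,+,·) be a left brace, with left action ᵃb := a·b − a and right action aᵇ := ^((ᵃb)⁻¹)a, and assume the associated symmetric group (G,r) satisfies condition lri: ᵃ(bᵃ) = b = (ᵃb)ᵃ for all a,b ∈ G. Then G is a two-sided brace if and only if the identity c·(c^(a·b·c)) = (cᵇ)·(c^((aᵇ)·(cᵇ))) holds for all a,b,c ∈ G. -/
private theorem eq_of_abel {A : Type*} [AddCommGroup A] {X Y P Q : A}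
    (h : P = Q) (hh : X - Y = P - Q) : X = Y := by
  have h0 : X - Y = 0 := by rw [hh, h, sub_self]
  exact sub_eq_zero.mp h0

/-- Let `(G,+,·)` be a left brace with left action
`ᵃb := a·b − a` and right action `aᵇ := ^((ᵃb)⁻¹)a`, and assume the associated
symmetric group `(G,r)` satisfies condition lri: `ᵃ(bᵃ) = b = (ᵃb)ᵃ`.  Then `G`
is a two-sided brace if and only if
`c·(c^(a·b·c)) = (cᵇ)·(c^((aᵇ)·(cᵇ)))` for all `a,b,c`. -/
theorem twoSided_iff_identity_lri {G : Type*} [Group G] [AddCommGroup G]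
    (hleft : ∀ a b c : G, a * (b + c) + a = a * b + a * c)
    (lact ract : G → G → G)
    (hlact : ∀ a b : G, lact a b = a * b - a)
    (hract : ∀ a b : G, ract a b = lact (lact a b)⁻¹ a)
    (hlri : ∀ a b : G, lact a (ract b a) = b ∧ ract (lact a b) a = b) :
    (∀ a b c : G, (a + b) * c + c = a * c + b * c) ↔
    (∀ a b c : G, c * ract c (a * b * c)
        = ract c b * ract c (ract a b * ract c b)) := by
  -- basic consequences of the left brace axioms
  have h10 : (1 : G) = 0 := by
    have h := hleft 1 0 0
    simpa using h
  have hmul_add : ∀ a b c : G, a * (b + c) = a * b + a * c - a :=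
    fun a b c => eq_sub_of_add_eq (hleft a b c)
  have hmul_sub : ∀ a b c : G, a * (b - c) = a * b - a * c + a := by
    intro a b c
    have hb : b - c + c = b := by abel
    have h := hmul_add a (b - c) c
    rw [hb] at h
    rw [h]; abel
  have hmulz : ∀ u z : G, u * z = lact u z + u := by
    intro u z; rw [hlact u z]; abel
  have hL : ∀ a x y : G, lact a (x + y) = lact a x + lact a y := by
    intro a x y
    rw [hlact, hlact, hlact, hmul_add]; abel
  have hLsub : ∀ a x y : G, lact a (x - y) = lact a x - lact a y := by
    intro a x y
    rw [hlact, hlact, hlact, hmul_sub]; abel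
  have hLmul : ∀ a b x : G, lact (a * b) x = lact a (lact b x) := by
    intro a b x
    rw [hlact, hlact, hlact, hmul_sub, mul_assoc]; abel
  have hLone : ∀ x : G, lact 1 x = x := by
    intro x; rw [hlact, one_mul, h10, sub_zero]
  have hLinv : ∀ a x : G, lact a⁻¹ (lact a x) = x := by
    intro a x; rw [← hLmul, inv_mul_cancel, hLone]
  have hLinv' : ∀ a x : G, lact a (lact a⁻¹ x) = x := by
    intro a x; rw [← hLmul, mul_inv_cancel, hLone]
  have hLg : ∀ g : G, lact g⁻¹ g = -g⁻¹ := by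
    intro g; rw [hlact, inv_mul_cancel, h10]; abel
  -- under lri the right action is `ract u v = lact v⁻¹ u`
  have hractL : ∀ u v : G, ract u v = lact v⁻¹ u := by
    intro u v
    have h := (hlri v u).1
    calc ract u v = lact v⁻¹ (lact v (ract u v)) := (hLinv v (ract u v)).symm
      _ = lact v⁻¹ u := by rw [h]
  have hlriK : ∀ c g : G, lact (lact c g⁻¹)⁻¹ c = lact g c := by
    intro c g
    rw [← hract c g⁻¹, hractL c g⁻¹, inv_inv]
  -- normal forms of the two sides of the identity
  have key1 : ∀ a b c : G, c * ract c (a * b * c) = lact (a * b)⁻¹ c + c := by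
    intro a b c
    rw [hractL c (a * b * c), hmulz, ← hLmul,
      show c * (a * b * c)⁻¹ = (a * b)⁻¹ by group]
  have key2 : ∀ a b c : G, ract c b * ract c (ract a b * ract c b)
      = lact (lact b⁻¹ a)⁻¹ c + lact b⁻¹ c := by
    intro a b c
    rw [hractL c b, hractL a b,
      hractL c (lact b⁻¹ a * lact b⁻¹ c), hmulz, ← hLmul,
      show lact b⁻¹ c * (lact b⁻¹ a * lact b⁻¹ c)⁻¹ = (lact b⁻¹ a)⁻¹ by group]
  -- E₄ from the key pointwise consequence Kg of lri
  have hE4_of : (∀ c g : G, lact c (lact g c) = lact c c + lact g c - c) →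
      ∀ a b : G, lact a⁻¹ (lact b a) = lact b a - a - a⁻¹ := by
    intro hKg a b
    have h := congrArg (lact a⁻¹) (hKg a b)
    rw [hLinv, hLsub, hL, hLinv, hLg] at h
    exact eq_of_abel h.symm (by abel)
  constructor
  · -- two-sided ⟹ identity
    intro hT
    have hT7e : ∀ b x y : G,
        lact (lact b x) y = lact b (lact x y) + y - lact b y := by
      intro b x y
      have h := hT (lact b x) b y
      have hbx : lact b x + b = b * x := by rw [hlact]; abel
      rw [hbx] at h
      simp only [hlact] at h ⊢
      rw [hmul_sub b (x * y) x, ← mul_assoc b x y]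
      exact eq_of_abel h.symm (by abel)
    have hKg : ∀ c g : G, lact c (lact g c) = lact c c + lact g c - c := by
      intro c g
      have h1 := congrArg (lact (lact c g⁻¹)) (hlriK c g)
      rw [hLinv'] at h1
      have h2 := hT7e c g⁻¹ (lact g c)
      rw [hLinv] at h2
      rw [h2] at h1
      exact eq_of_abel h1 (by abel)
    have hE4 := hE4_of hKg
    have hE : ∀ a b : G, (lact b a)⁻¹ = lact b a⁻¹ := by
      intro a b
      have hE4' : lact a (lact b a⁻¹) = lact b a⁻¹ - a⁻¹ - a := by
        have h := hE4 a⁻¹ b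
        rwa [inv_inv] at h
      have h := hT7e b a (lact b a⁻¹)
      rw [hE4', hLsub, hLsub] at h
      have h2 : lact (lact b a) (lact b a⁻¹) = -(lact b a) := by rw [h]; abel
      rw [hlact] at h2
      have h3 : lact b a * lact b a⁻¹ = 1 := by
        rw [h10]
        exact eq_of_abel h2 (by abel)
      exact (eq_inv_of_mul_eq_one_right h3).symm
    have hF3e : ∀ a b y : G,
        lact (lact b a)⁻¹ y = lact b (lact a⁻¹ y) + y - lact b y := by
      intro a b y
      have h := hT7e b a⁻¹ y
      rwa [← hE a b] at h
    intro a b c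
    rw [key1, key2]
    have h := hF3e a b⁻¹ c
    rw [← hLmul, ← mul_inv_rev] at h
    exact eq_of_abel h.symm (by abel)
  · -- identity ⟹ two-sided
    intro hI
    have hI'e : ∀ a b c : G,
        lact (a * b)⁻¹ c + c = lact (lact b⁻¹ a)⁻¹ c + lact b⁻¹ c := by
      intro a b c
      have h := hI a b c
      rw [key1, key2] at h
      exact h
    have hF3e : ∀ a b y : G,
        lact (lact b a)⁻¹ y = lact b (lact a⁻¹ y) + y - lact b y := by
      intro a b y
      have h := hI'e a b⁻¹ y
      rw [inv_inv, show (a * b⁻¹)⁻¹ = b * a⁻¹ by group, hLmul] at h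
      exact eq_of_abel h.symm (by abel)
    have hKg : ∀ c g : G, lact c (lact g c) = lact c c + lact g c - c := by
      intro c g
      have h := hF3e g⁻¹ c c
      rw [inv_inv, hlriK c g] at h
      exact eq_of_abel h.symm (by abel)
    have hE4 := hE4_of hKg
    have hE : ∀ a b : G, (lact b a)⁻¹ = lact b a⁻¹ := by
      intro a b
      have h := hF3e a b (lact b a)
      rw [hLg, hE4 a b, hLsub, hLsub] at h
      have h2 : -(lact b a)⁻¹ = -(lact b a⁻¹) := by rw [h]; abel
      exact neg_injective h2
    have hT7e : ∀ b x y : G,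
        lact (lact b x) y = lact b (lact x y) + y - lact b y := by
      intro b x y
      have h := hF3e x⁻¹ b y
      rwa [hE x⁻¹ b, inv_inv] at h
    intro a b c
    have hx : lact b (lact b⁻¹ a) = a := hLinv' b a
    have h7 := hT7e b (lact b⁻¹ a) c
    rw [hx, ← hLmul] at h7
    have hab : b * lact b⁻¹ a = a + b := by
      rw [hlact, hmul_sub, ← mul_assoc, mul_inv_cancel, one_mul, h10]; abel
    rw [hab] at h7
    simp only [hlact] at h7
    exact eq_of_abel h7.symm (by abel)
end
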